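/- Given an HMS structure M in H_n^C(Φ) (satisfying confinedness, projections preserve knowledge and ignorance, and the conditions corresponding to C ⊆ {r,t,e}), there exists an awareness structure M' on the same state set whose awareness is generated by primitive propositions and whose possibility correspondences satisfy the conditions in C, such that for all φ ∈ L^K_n(Φ), if s ∈ S_Ψ and all primitive propositions of φ lie in Ψ, then (M,s) ⊨ φ iff (M',s) ⊨ φ_X, where φ_X replaces each K_i by X_i. -/

import Mathlib

inductive Form (α : Type) (n : ℕ) : Type
  | top : Form α n
  | prim (p : α) : Form α n
  | neg (φ : Form α n) : Form α n
  | and (φ ψ : Form α n) : Form α n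
  | imp (φ ψ : Form α n) : Form α n
  | know (i : Fin n) (φ : Form α n) : Form α n

namespace Form

/-- The set of primitive propositions occurring in a formula. -/
def prims {α : Type} {n : ℕ} : Form α n → Set α
  | top => ∅
  | prim p => {p}
  | neg φ => prims φ
  | and φ ψ => prims φ ∪ prims ψ
  | imp φ ψ => prims φ ∪ prims ψ
  | know _ φ => prims φ

/-- Formulas of `L^K_n` : no occurrence of the nonstandard implication `↪`. -/
def ImpFree {α : Type} {n : ℕ} : Form α n → Prop
  | top => True
  | prim _ => True
  | neg φ => ImpFree φ
  | and φ ψ => ImpFree φ ∧ ImpFree ψ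
  | imp _ _ => False
  | know _ φ => ImpFree φ

end Form

/-- `φ = 1` abbreviates `¬(φ ↪ ¬⊤)`. -/
def eqOne {α : Type} {n : ℕ} (φ : Form α n) : Form α n := .neg (.imp φ (.neg .top))
/-- `φ = 0` abbreviates `¬(¬φ ↪ ¬⊤)`. -/
def eqZero {α : Type} {n : ℕ} (φ : Form α n) : Form α n := .neg (.imp (.neg φ) (.neg .top))
/-- `φ = 1/2` abbreviates `(φ ↪ ¬⊤) ∧ (¬φ ↪ ¬⊤)`. -/
def eqHalf {α : Type} {n : ℕ} (φ : Form α n) : Form α n :=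
  .and (.imp φ (.neg .top)) (.imp (.neg φ) (.neg .top))
/-- `φ ⇌ ψ` abbreviates `(φ ↪ ψ) ∧ (ψ ↪ φ)`. -/
def biimp {α : Type} {n : ℕ} (a b : Form α n) : Form α n := .and (.imp a b) (.imp b a)
/-- `φ ∨ ψ` abbreviates `¬(¬φ ∧ ¬ψ)`. -/
def orF {α : Type} {n : ℕ} (a b : Form α n) : Form α n := .neg (.and (.neg a) (.neg b))

/-- An HMS structure for `n` agents over the set `α` of primitive propositions.
States are partitioned into spaces `S_Ψ` (recorded by `space`); `pi s p = none`
means `p` is undefined (value 1/2) at `s`; `proj s Ψ` is the projection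
`ρ_{space s, Ψ} s`, meaningful when `Ψ ⊆ space s`. -/
structure HMS (α : Type) (n : ℕ) where
  State : Type
  space : State → Set α
  pi : State → α → Option Bool
  pi_def : ∀ s p, (pi s p).isSome ↔ p ∈ space s
  k : Fin n → State → Set State
  proj : State → Set α → State
  proj_space : ∀ s Ψ, Ψ ⊆ space s → space (proj s Ψ) = Ψ
  proj_pi : ∀ s Ψ p, Ψ ⊆ space s → p ∈ Ψ → pi (proj s Ψ) p = pi s p
  proj_comp : ∀ s Ψ Ψ', Ψ ⊆ Ψ' → Ψ' ⊆ space s → proj (proj s Ψ') Ψ = proj s Ψ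
  proj_surj : ∀ (t : State) (Ψ' : Set α), space t ⊆ Ψ' →
    ∃ s, space s = Ψ' ∧ proj s (space t) = t

namespace HMS

/-- 3-valued satisfaction: `(satp M φ s).1` is "φ is true at s",
`(satp M φ s).2` is "¬φ is true at s" (i.e. φ is false at s). -/
def satp {α : Type} {n : ℕ} (M : HMS α n) : Form α n → M.State → Prop × Prop
  | .top => fun _ => (True, False)
  | .prim p => fun s => (M.pi s p = some true, M.pi s p = some false)
  | .neg φ => fun s => ((satp M φ s).2, (satp M φ s).1)
  | .and φ ψ => fun s =>
      ((satp M φ s).1 ∧ (satp M ψ s).1,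
       ((satp M φ s).2 ∧ (satp M ψ s).1) ∨ ((satp M φ s).1 ∧ (satp M ψ s).2) ∨
         ((satp M φ s).2 ∧ (satp M ψ s).2))
  | .imp φ ψ => fun s =>
      (((satp M φ s).1 ∧ (satp M ψ s).1) ∨ (¬ (satp M φ s).1 ∧ ¬ (satp M φ s).2) ∨
         ((satp M φ s).2 ∧ ((satp M ψ s).1 ∨ (satp M ψ s).2)),
       (satp M φ s).1 ∧ (satp M ψ s).2)
  | .know i φ => fun s =>
      (((satp M φ s).1 ∨ (satp M φ s).2) ∧ ∀ t ∈ M.k i s, (satp M φ t).1,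
       ((satp M φ s).1 ∨ (satp M φ s).2) ∧
         ¬ (((satp M φ s).1 ∨ (satp M φ s).2) ∧ ∀ t ∈ M.k i s, (satp M φ t).1))

/-- `(M,s) ⊨ φ`. -/
def Sat {α : Type} {n : ℕ} (M : HMS α n) (s : M.State) (φ : Form α n) : Prop :=
  (satp M φ s).1
/-- `(M,s) ⊨ ¬φ`. -/
def SatN {α : Type} {n : ℕ} (M : HMS α n) (s : M.State) (φ : Form α n) : Prop :=
  (satp M φ s).2
/-- `φ` is defined (true or false) at `s`. -/
def Defined {α : Type} {n : ℕ} (M : HMS α n) (s : M.State) (φ : Form α n) : Prop :=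
  M.Sat s φ ∨ M.SatN s φ

/-- `⟦φ⟧_M`, the set of states where `φ` is true. -/
def truthSet {α : Type} {n : ℕ} (M : HMS α n) (φ : Form α n) : Set M.State :=
  {s | M.Sat s φ}

/-- Confinedness: if `s ∈ S_Ψ` then `K_i(s) ⊆ S_{Ψ'}` for some `Ψ' ⊆ Ψ`. -/
def Confined {α : Type} {n : ℕ} (M : HMS α n) : Prop :=
  ∀ (i : Fin n) (s : M.State), ∃ Ψ', Ψ' ⊆ M.space s ∧ ∀ t ∈ M.k i s, M.space t = Ψ'

/-- `(K_i(s))^↑`, the states in which (some member of) `K_i(s)` is expressible: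
`x ∈ (K_i(s))^↑` iff some `t ∈ K_i(s)` lies in a space `⊆ space x` and `x` projects to `t`. -/
def kUp {α : Type} {n : ℕ} (M : HMS α n) (i : Fin n) (s : M.State) : Set M.State :=
  {x | ∃ t ∈ M.k i s, M.space t ⊆ M.space x ∧ M.proj x (M.space t) = t}

/-- Generalized reflexivity (`r`): `s ∈ (K_i(s))^↑`. -/
def GenRefl {α : Type} {n : ℕ} (M : HMS α n) : Prop :=
  ∀ (i : Fin n) (s : M.State), s ∈ M.kUp i s
/-- Stationarity, part (a) (`t`): `s' ∈ K_i(s)` implies `K_i(s') ⊆ K_i(s)`. -/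
def StatA {α : Type} {n : ℕ} (M : HMS α n) : Prop :=
  ∀ (i : Fin n) (s s' : M.State), s' ∈ M.k i s → M.k i s' ⊆ M.k i s
/-- Stationarity, part (b) (`e`): `s' ∈ K_i(s)` implies `K_i(s') ⊇ K_i(s)`. -/
def StatB {α : Type} {n : ℕ} (M : HMS α n) : Prop :=
  ∀ (i : Fin n) (s s' : M.State), s' ∈ M.k i s → M.k i s ⊆ M.k i s'
/-- Projections preserve knowledge. -/
def ProjKnow {α : Type} {n : ℕ} (M : HMS α n) : Prop :=
  ∀ (i : Fin n) (s : M.State) (Ψ1 Ψ2 : Set α), Ψ1 ⊆ Ψ2 → Ψ2 ⊆ M.space s →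
    (∀ t ∈ M.k i s, M.space t = Ψ2) →
    (fun t => M.proj t Ψ1) '' M.k i s = M.k i (M.proj s Ψ1)
/-- Projections preserve ignorance. -/
def ProjIgn {α : Type} {n : ℕ} (M : HMS α n) : Prop :=
  ∀ (i : Fin n) (s : M.State) (Ψ : Set α), Ψ ⊆ M.space s →
    M.kUp i s ⊆ M.kUp i (M.proj s Ψ)

end HMS

/-- An awareness structure for `n` agents over `α`, with state set `S`. -/
structure Aw (α : Type) (n : ℕ) (S : Type) where
  pi : S → α → Bool
  k : Fin n → S → Set S
  aw : Fin n → S → Set (Form α n)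

namespace Aw

/-- Satisfaction where the modality `know i` of `L^K_n` is read as *explicit
knowledge* `X_i` (i.e. this evaluates the translation `φ_X` of a formula `φ`):
`X_i ψ` holds iff `ψ ∈ A_i(s)` and `ψ` holds at all `K_i`-successors. -/
def xsat {α : Type} {n : ℕ} {S : Type} (M : Aw α n S) : Form α n → S → Prop
  | .top => fun _ => True
  | .prim p => fun s => M.pi s p = true
  | .neg φ => fun s => ¬ xsat M φ s
  | .and φ ψ => fun s => xsat M φ s ∧ xsat M ψ s
  | .imp φ ψ => fun s => xsat M φ s → xsat M ψ s
  | .know i φ => fun s => φ ∈ M.aw i s ∧ ∀ t ∈ M.k i s, xsat M φ t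

/-- Awareness is generated by primitive propositions. -/
def PropGen {α : Type} {n : ℕ} {S : Type} (M : Aw α n S) : Prop :=
  ∀ (i : Fin n) (s : S) (φ : Form α n),
    φ ∈ M.aw i s ↔ ∀ p ∈ φ.prims, Form.prim p ∈ M.aw i s

/-- Agents know what they are aware of. -/
def KnowsAw {α : Type} {n : ℕ} {S : Type} (M : Aw α n S) : Prop :=
  ∀ (i : Fin n) (s t : S), t ∈ M.k i s → M.aw i t = M.aw i s

end Aw


/-! Truth of an `L^K_n`-formula at `s` depends only on the projection of `s` onto any space
containing the formula's primitive propositions; this is where confinedness and the two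
projection conditions enter, through the identity `K_i(ρ_Ψ s) = ρ_{Ψ ∩ Ψ₂}(K_i(s))` for
`K_i(s) ⊆ S_{Ψ₂}`. Hence agent `i` at `s` may be given any possibility set `K'_i(s) ⊇ K_i(s)`
whose members project into `K_i(s)` on the common space `Ψ` of `K_i(s)`, provided `i` is made
aware of exactly the formulas over `Ψ`: knowledge of such formulas is unchanged, and a formula
known in the HMS structure is automatically over `Ψ`. Without `r` we take `K'_i = K_i`; under `r`
we add `s` itself; under `r` and `e` we take the equivalence relation `K_i(t) = K_i(s)`, which
contains `K_i` because `r`, `e` and projections preserving knowledge force `K_i(u) = K_i(s)` for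
`u ∈ K_i(s)`. -/

namespace HMS

variable {α : Type} {n : ℕ} (M : HMS α n)

theorem proj_self (s : M.State) : M.proj s (M.space s) = s := by
  obtain ⟨x, hx, hxs⟩ := M.proj_surj s (M.space s) subset_rfl
  have h := M.proj_comp x (M.space s) (M.space s) subset_rfl hx.ge
  rwa [hxs] at h

theorem image_proj_eq_self {S : Set M.State} {Ψ : Set α} (h : ∀ t ∈ S, M.space t = Ψ) :
    (fun t => M.proj t Ψ) '' S = S := by
  refine (Set.image_congr fun t ht => ?_).trans (Set.image_id S)
  rw [← h t ht, M.proj_self, id]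

theorem mem_kUp_of_mem {i : Fin n} {s t : M.State} (ht : t ∈ M.k i s) : t ∈ M.kUp i s :=
  ⟨t, ht, subset_rfl, M.proj_self t⟩

section ThreeValued

variable {M}

theorem defined_of_prims_subset {φ : Form α n} (hφ : φ.ImpFree) {s : M.State}
    (h : φ.prims ⊆ M.space s) : M.Defined s φ := by
  induction φ with
  | top => exact Or.inl trivial
  | prim p =>
    obtain ⟨b, hb⟩ := Option.isSome_iff_exists.mp ((M.pi_def s p).2 (h rfl))
    cases b <;> simp [Defined, Sat, SatN, satp, hb]
  | neg φ ih => exact (ih hφ h).symm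
  | and φ ψ ihφ ihψ =>
    rcases ihφ hφ.1 (Set.union_subset_iff.mp h).1 with h₁ | h₁ <;>
      rcases ihψ hφ.2 (Set.union_subset_iff.mp h).2 with h₂ | h₂
    · exact Or.inl ⟨h₁, h₂⟩
    · exact Or.inr (Or.inr (Or.inl ⟨h₁, h₂⟩))
    · exact Or.inr (Or.inl ⟨h₁, h₂⟩)
    · exact Or.inr (Or.inr (Or.inr ⟨h₁, h₂⟩))
  | imp => exact hφ.elim
  | know i φ ih => exact (em _).imp_right fun h' => ⟨ih hφ h, h'⟩

theorem not_sat_and_satN {φ : Form α n} (hφ : φ.ImpFree) (s : M.State) :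
    ¬ (M.Sat s φ ∧ M.SatN s φ) := by
  induction φ with
  | top => exact fun h => h.2
  | prim p => exact fun h => by cases h.1.symm.trans h.2
  | neg φ ih => exact fun h => ih hφ ⟨h.2, h.1⟩
  | and φ ψ ihφ ihψ =>
    rintro ⟨⟨h₁, h₂⟩, h | h | h⟩
    exacts [ihφ hφ.1 ⟨h₁, h.1⟩, ihψ hφ.2 ⟨h₂, h.2⟩, ihφ hφ.1 ⟨h₁, h.1⟩]
  | imp => exact hφ.elim
  | know i φ ih => exact fun h => h.2.2 h.1

theorem satN_iff_not_sat {φ : Form α n} (hφ : φ.ImpFree) {s : M.State}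
    (h : φ.prims ⊆ M.space s) : M.SatN s φ ↔ ¬ M.Sat s φ :=
  ⟨fun hN hS => not_sat_and_satN hφ s ⟨hS, hN⟩, (defined_of_prims_subset hφ h).resolve_left⟩

theorem prims_subset_of_defined {φ : Form α n} (hφ : φ.ImpFree) {s : M.State}
    (h : M.Defined s φ) : φ.prims ⊆ M.space s := by
  induction φ with
  | top => exact Set.empty_subset _
  | prim p =>
    have hsome : (M.pi s p).isSome := by
      rcases h with h | h <;> simp [Sat, SatN, satp] at h <;> simp [h]
    exact Set.singleton_subset_iff.mpr ((M.pi_def s p).1 hsome)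
  | neg φ ih => exact ih hφ h.symm
  | and φ ψ ihφ ihψ =>
    have hd : M.Defined s φ ∧ M.Defined s ψ := by
      rcases h with h | h | h | h
      exacts [⟨Or.inl h.1, Or.inl h.2⟩, ⟨Or.inr h.1, Or.inl h.2⟩, ⟨Or.inl h.1, Or.inr h.2⟩,
        ⟨Or.inr h.1, Or.inr h.2⟩]
    exact Set.union_subset (ihφ hφ.1 hd.1) (ihψ hφ.2 hd.2)
  | imp => exact hφ.elim
  | know i φ ih => exact ih hφ (h.elim And.left And.left)

theorem prims_subset_of_sat {φ : Form α n} (hφ : φ.ImpFree) {s : M.State}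
    (h : M.Sat s φ) : φ.prims ⊆ M.space s :=
  prims_subset_of_defined hφ (Or.inl h)

theorem sat_know_iff {i : Fin n} {φ : Form α n} (hφ : φ.ImpFree) {s : M.State}
    (h : φ.prims ⊆ M.space s) : M.Sat s (.know i φ) ↔ ∀ t ∈ M.k i s, M.Sat t φ :=
  and_iff_right (defined_of_prims_subset hφ h)

end ThreeValued

theorem space_of_mem_k_proj (hpk : M.ProjKnow) {i : Fin n} {s : M.State} {Ψ₁ Ψ₂ : Set α}
    (hΨ₁ : Ψ₁ ⊆ Ψ₂) (hΨ₂ : Ψ₂ ⊆ M.space s) (hK : ∀ t ∈ M.k i s, M.space t = Ψ₂) :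
    ∀ u ∈ M.k i (M.proj s Ψ₁), M.space u = Ψ₁ := by
  rw [← hpk i s Ψ₁ Ψ₂ hΨ₁ hΨ₂ hK]
  rintro _ ⟨t, ht, rfl⟩
  exact M.proj_space t Ψ₁ (hK t ht ▸ hΨ₁)

theorem k_proj (hconf : M.Confined) (hpk : M.ProjKnow) (hpi : M.ProjIgn) {i : Fin n}
    {s : M.State} {Ψ Ψ₂ : Set α} (hΨ : Ψ ⊆ M.space s) (hΨ₂ : Ψ₂ ⊆ M.space s)
    (hK : ∀ t ∈ M.k i s, M.space t = Ψ₂) :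
    M.k i (M.proj s Ψ) = (fun t => M.proj t (Ψ ∩ Ψ₂)) '' M.k i s := by
  rcases (M.k i s).eq_empty_or_nonempty with hempty | ⟨t, ht⟩
  · rw [← hpk i s Ψ (M.space s) hΨ subset_rfl (by simp [hempty]), hempty, Set.image_empty,
      Set.image_empty]
  have hs' : M.space (M.proj s Ψ) = Ψ := M.proj_space s Ψ hΨ
  have hcomp : M.proj (M.proj s Ψ) (Ψ ∩ Ψ₂) = M.proj s (Ψ ∩ Ψ₂) :=
    M.proj_comp s _ _ Set.inter_subset_left hΨ
  obtain ⟨Ψ₃, hΨ₃, hK'⟩ := hconf i (M.proj s Ψ)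
  rw [hs'] at hΨ₃
  -- `ProjIgn` bounds the common space `Ψ₃` of `K_i(ρ_Ψ s)` from both sides
  obtain ⟨u, hu, hΨ₃Ψ₂, -⟩ := hpi i s Ψ hΨ (M.mem_kUp_of_mem ht)
  rw [hK t ht, hK' u hu] at hΨ₃Ψ₂
  obtain ⟨v, hv, hΨ₀Ψ₃, -⟩ :=
    hpi i _ (Ψ ∩ Ψ₂) (hs'.symm ▸ Set.inter_subset_left) (M.mem_kUp_of_mem hu)
  rw [hcomp] at hv
  rw [M.space_of_mem_k_proj hpk Set.inter_subset_right hΨ₂ hK v hv, hK' u hu] at hΨ₀Ψ₃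
  rw [(Set.subset_inter hΨ₃ hΨ₃Ψ₂).antisymm hΨ₀Ψ₃] at hK'
  calc M.k i (M.proj s Ψ)
      = (fun t => M.proj t (Ψ ∩ Ψ₂)) '' M.k i (M.proj s Ψ) := (M.image_proj_eq_self hK').symm
    _ = M.k i (M.proj s (Ψ ∩ Ψ₂)) := by
      rw [hpk i _ _ _ subset_rfl (hs'.symm ▸ Set.inter_subset_left) hK', hcomp]
    _ = (fun t => M.proj t (Ψ ∩ Ψ₂)) '' M.k i s :=
      (hpk i s _ Ψ₂ Set.inter_subset_right hΨ₂ hK).symm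

theorem sat_proj_iff (hconf : M.Confined) (hpk : M.ProjKnow) (hpi : M.ProjIgn)
    {φ : Form α n} (hφ : φ.ImpFree) {s : M.State} {Ψ : Set α} (hφΨ : φ.prims ⊆ Ψ)
    (hΨ : Ψ ⊆ M.space s) : M.Sat (M.proj s Ψ) φ ↔ M.Sat s φ := by
  induction φ generalizing s Ψ with
  | top => exact Iff.rfl
  | prim p =>
    show M.pi (M.proj s Ψ) p = some true ↔ M.pi s p = some true
    rw [M.proj_pi s Ψ p hΨ (hφΨ rfl)]
  | neg φ ih =>
    have hs' : φ.prims ⊆ M.space (M.proj s Ψ) := (M.proj_space s Ψ hΨ).symm ▸ hφΨ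
    exact (satN_iff_not_sat (φ := φ) hφ hs').trans <|
      (not_congr (ih hφ hφΨ hΨ)).trans (satN_iff_not_sat (φ := φ) hφ (hφΨ.trans hΨ)).symm
  | and φ ψ ihφ ihψ =>
    obtain ⟨hφΨ', hψΨ⟩ := Set.union_subset_iff.mp hφΨ
    exact and_congr (ihφ hφ.1 hφΨ' hΨ) (ihψ hφ.2 hψΨ hΨ)
  | imp => exact hφ.elim
  | know i φ ih =>
    obtain ⟨Ψ₂, hΨ₂, hK⟩ := hconf i s
    rw [sat_know_iff (φ := φ) hφ ((M.proj_space s Ψ hΨ).symm ▸ hφΨ),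
      sat_know_iff (φ := φ) hφ (hφΨ.trans hΨ),
      M.k_proj hconf hpk hpi hΨ hΨ₂ hK, Set.forall_mem_image]
    refine forall₂_congr fun t ht => ?_
    have htΨ : Ψ ∩ Ψ₂ ⊆ M.space t := hK t ht ▸ Set.inter_subset_right
    by_cases hφΨ₀ : φ.prims ⊆ Ψ ∩ Ψ₂
    · exact ih hφ hφΨ₀ htΨ
    · refine iff_of_false (fun h => hφΨ₀ ?_) (fun h => hφΨ₀ ?_)
      · exact M.proj_space t _ htΨ ▸ prims_subset_of_sat (φ := φ) hφ h
      · exact Set.subset_inter hφΨ (hK t ht ▸ prims_subset_of_sat (φ := φ) hφ h)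

open Classical in
/-- The primitive propositions agent `i` is aware of at `s`. -/
noncomputable def awSpace (i : Fin n) (s : M.State) : Set α :=
  if h : (M.k i s).Nonempty then M.space h.some else M.space s

theorem space_eq_awSpace (hconf : M.Confined) {i : Fin n} {s t : M.State}
    (ht : t ∈ M.k i s) : M.space t = M.awSpace i s := by
  obtain ⟨Ψ, -, hK⟩ := hconf i s
  have hne : (M.k i s).Nonempty := ⟨t, ht⟩
  rw [awSpace, dif_pos hne, hK t ht, hK _ hne.some_mem]

theorem awSpace_subset_space (hconf : M.Confined) (i : Fin n) (s : M.State) :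
    M.awSpace i s ⊆ M.space s := by
  obtain ⟨Ψ, hΨ, hK⟩ := hconf i s
  by_cases hne : (M.k i s).Nonempty
  · rw [awSpace, dif_pos hne, hK _ hne.some_mem]
    exact hΨ
  · rw [awSpace, dif_neg hne]

noncomputable def toAw (K' : Fin n → M.State → Set M.State) : Aw α n M.State where
  pi s p := (M.pi s p).getD false
  k := K'
  aw i s := {φ | φ.prims ⊆ M.awSpace i s}

theorem propGen_toAw (K' : Fin n → M.State → Set M.State) : (M.toAw K').PropGen := by
  intro i s φ
  simp [toAw, Form.prims, Set.subset_def]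

/-- `K'` enlarges `K` only by states that agree with a member of `K_i(s)` on everything
agent `i` is aware of at `s`. -/
structure ConservativeExt (K' : Fin n → M.State → Set M.State) : Prop where
  subset : ∀ i s, M.k i s ⊆ K' i s
  proj_mem : ∀ i s, ∀ t ∈ K' i s,
    M.awSpace i s ⊆ M.space t ∧ M.proj t (M.awSpace i s) ∈ M.k i s

theorem forall_k_sat_iff (hconf : M.Confined) (hpk : M.ProjKnow) (hpi : M.ProjIgn)
    {K' : Fin n → M.State → Set M.State} (hK' : M.ConservativeExt K') {i : Fin n}
    {φ : Form α n} (hφ : φ.ImpFree) {s : M.State} (h : φ.prims ⊆ M.space s) :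
    (∀ t ∈ M.k i s, M.Sat t φ) ↔ φ.prims ⊆ M.awSpace i s ∧ ∀ t ∈ K' i s, M.Sat t φ := by
  refine ⟨fun hall => ?_, fun hall t ht => hall.2 t (hK'.subset i s ht)⟩
  have haw : φ.prims ⊆ M.awSpace i s := by
    by_cases hne : (M.k i s).Nonempty
    · obtain ⟨t, ht⟩ := hne
      exact M.space_eq_awSpace hconf ht ▸ prims_subset_of_sat hφ (hall t ht)
    · rwa [awSpace, dif_neg hne]
  refine ⟨haw, fun t ht => ?_⟩
  obtain ⟨hsub, hmem⟩ := hK'.proj_mem i s t ht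
  exact (M.sat_proj_iff hconf hpk hpi hφ haw hsub).mp (hall _ hmem)

theorem sat_iff_xsat_toAw (hconf : M.Confined) (hpk : M.ProjKnow) (hpi : M.ProjIgn)
    {K' : Fin n → M.State → Set M.State} (hK' : M.ConservativeExt K') (φ : Form α n)
    (s : M.State) (hφ : φ.ImpFree) (h : φ.prims ⊆ M.space s) :
    M.Sat s φ ↔ (M.toAw K').xsat φ s := by
  induction φ generalizing s with
  | top => exact Iff.rfl
  | prim p =>
    show M.pi s p = some true ↔ (M.pi s p).getD false = true
    cases M.pi s p <;> simp
  | neg φ ih => exact (satN_iff_not_sat (φ := φ) hφ h).trans (not_congr (ih s hφ h))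
  | and φ ψ ihφ ihψ =>
    obtain ⟨hφs, hψs⟩ := Set.union_subset_iff.mp h
    exact and_congr (ihφ s hφ.1 hφs) (ihψ s hφ.2 hψs)
  | imp => exact hφ.elim
  | know i φ ih =>
    rw [sat_know_iff (φ := φ) hφ h, M.forall_k_sat_iff hconf hpk hpi hK' (φ := φ) hφ h]
    refine and_congr_right fun haw => forall₂_congr fun t ht => ih t hφ ?_
    exact haw.trans (hK'.proj_mem i s t ht).1

theorem conservativeExt_k (hconf : M.Confined) : M.ConservativeExt M.k where
  subset _ _ := subset_rfl
  proj_mem i s t ht := by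
    rw [← M.space_eq_awSpace hconf ht, M.proj_self]
    exact ⟨subset_rfl, ht⟩

theorem proj_awSpace_mem (hconf : M.Confined) (hr : M.GenRefl) (i : Fin n) (s : M.State) :
    M.proj s (M.awSpace i s) ∈ M.k i s := by
  obtain ⟨t, ht, -, hproj⟩ := hr i s
  rw [M.space_eq_awSpace hconf ht] at hproj
  rwa [hproj]

theorem conservativeExt_insert (hconf : M.Confined) (hr : M.GenRefl) :
    M.ConservativeExt fun i s => insert s (M.k i s) where
  subset _ _ := Set.subset_insert _ _
  proj_mem i s t ht := by
    rcases ht with rfl | ht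
    · exact ⟨M.awSpace_subset_space hconf i t, M.proj_awSpace_mem hconf hr i t⟩
    · exact (M.conservativeExt_k hconf).proj_mem i s t ht

theorem k_proj_awSpace (hconf : M.Confined) (hpk : M.ProjKnow) (i : Fin n) (s : M.State) :
    M.k i (M.proj s (M.awSpace i s)) = M.k i s := by
  have hK : ∀ t ∈ M.k i s, M.space t = M.awSpace i s := fun t => M.space_eq_awSpace hconf
  rw [← hpk i s _ _ subset_rfl (M.awSpace_subset_space hconf i s) hK, M.image_proj_eq_self hK]

theorem k_eq_of_mem (hconf : M.Confined) (hpk : M.ProjKnow) (hr : M.GenRefl) (he : M.StatB)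
    {i : Fin n} {s u : M.State} (hu : u ∈ M.k i s) : M.k i u = M.k i s := by
  have hs₀ := M.proj_awSpace_mem hconf hr i s
  refine subset_antisymm ?_ (he i s u hu)
  rw [← M.k_proj_awSpace hconf hpk i s]
  exact he i u _ (he i s u hu hs₀)

theorem conservativeExt_fiber (hconf : M.Confined) (hpk : M.ProjKnow) (hr : M.GenRefl)
    (he : M.StatB) : M.ConservativeExt fun i s => {t | M.k i t = M.k i s} where
  subset _ _ _ hu := M.k_eq_of_mem hconf hpk hr he hu
  proj_mem i s t ht := by
    have ht : M.k i t = M.k i s := ht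
    have ht₀ := M.proj_awSpace_mem hconf hr i t
    have haw : M.awSpace i t = M.awSpace i s := by
      rw [← M.space_eq_awSpace hconf ht₀, M.space_eq_awSpace hconf (ht ▸ ht₀ :)]
    rw [← haw, ← ht]
    exact ⟨M.awSpace_subset_space hconf i t, ht₀⟩

end HMS

/-- Theorem 3.2(a): from an HMS structure in `H_n^C(Φ)` one can build an awareness
structure on the same states, with awareness generated by primitive propositions and
possibility correspondences satisfying the conditions in `C`, agreeing with the HMS
structure in the sense that for `φ ∈ L^K_n(Φ)`, if `s ∈ S_Ψ` and `Φ_φ ⊆ Ψ` then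
`(M,s) ⊨ φ` iff `(M',s) ⊨ φ_X`. -/
theorem hms_to_awareness {α : Type} {n : ℕ} (M : HMS α n)
    (hconf : M.Confined) (hpk : M.ProjKnow) (hpi : M.ProjIgn)
    (cr ct ce : Prop)
    (hr : cr → M.GenRefl) (ht : ct → M.StatA) (he : ce → M.StatB) :
    ∃ M' : Aw α n M.State,
      M'.PropGen ∧
      (cr → ∀ (i : Fin n) (s : M.State), s ∈ M'.k i s) ∧
      (ct → ∀ (i : Fin n) (s t : M.State), t ∈ M'.k i s → M'.k i t ⊆ M'.k i s) ∧
      (ce → ∀ (i : Fin n) (s t : M.State), t ∈ M'.k i s → M'.k i s ⊆ M'.k i t) ∧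
      (∀ (φ : Form α n) (s : M.State), φ.ImpFree → φ.prims ⊆ M.space s →
        (M.Sat s φ ↔ M'.xsat φ s)) := by
  obtain ⟨K', hK', hrK', htK', heK'⟩ : ∃ K' : Fin n → M.State → Set M.State,
      M.ConservativeExt K' ∧ (cr → ∀ i s, s ∈ K' i s) ∧
      (ct → ∀ i s t, t ∈ K' i s → K' i t ⊆ K' i s) ∧
      (ce → ∀ i s t, t ∈ K' i s → K' i s ⊆ K' i t) := by
    by_cases hcr : cr
    · by_cases hce : ce
      · refine ⟨_, M.conservativeExt_fiber hconf hpk (hr hcr) (he hce), fun _ _ _ => rfl,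
          fun _ _ _ _ hts _ hu => hu.trans hts, fun _ _ _ _ hts _ hu => hu.trans hts.symm⟩
      · refine ⟨_, M.conservativeExt_insert hconf (hr hcr), fun _ _ _ => Set.mem_insert _ _,
          fun hct i s t hts => ?_, fun hce' => (hce hce').elim⟩
        rcases hts with rfl | hts
        · exact subset_rfl
        · exact Set.insert_subset (Set.mem_insert_of_mem _ hts)
            ((ht hct i s t hts).trans (Set.subset_insert _ _))
    · exact ⟨M.k, M.conservativeExt_k hconf, fun h => (hcr h).elim, fun h => ht h,
        fun h => he h⟩
  exact ⟨M.toAw K', M.propGen_toAw K', hrK', htK', heK',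
    M.sat_iff_xsat_toAw hconf hpk hpi hK'⟩
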